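/- arXiv:1809.00943 — 4 statements merged into one kernel-verified Lean document; each statement's English description precedes it below -/
import Mathlib

section
/- Let L be a normal modal logic enjoying ULIP. Then pre-interpolants exist: for every formula φ and all finite sets P, Q of propositional variables there exists a formula θ' such that v⁺(θ') ⊆ v⁺(φ)∖P, v⁻(θ') ⊆ v⁻(φ)∖Q, L ⊢ θ'→φ, and for every formula ψ with v⁺(ψ)∩P = ∅, v⁻(ψ)∩Q = ∅ and L ⊢ ψ→φ, one has L ⊢ ψ→θ'. -/
/-- Modal formulas: propositional variables, ⊥, →, □. -/
inductive Formula : Type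
  | var : ℕ → Formula
  | bot : Formula
  | imp : Formula → Formula → Formula
  | box : Formula → Formula
  deriving DecidableEq

namespace Formula

def neg (φ : Formula) : Formula := φ.imp bot

def top : Formula := neg bot

def and (φ ψ : Formula) : Formula := (φ.imp ψ.neg).neg

def iff (φ ψ : Formula) : Formula := (φ.imp ψ).and (ψ.imp φ)

def dia (φ : Formula) : Formula := φ.neg.box.neg

/-- Variables occurring positively (`true`) / negatively (`false`). -/
def vsgn : Formula → Bool → Finset ℕ
  | var p, true => {p}
  | var _, false => ∅
  | bot, _ => ∅
  | imp φ ψ, b => vsgn φ (!b) ∪ vsgn ψ b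
  | box φ, b => vsgn φ b

def vpos (φ : Formula) : Finset ℕ := vsgn φ true
def vneg (φ : Formula) : Finset ℕ := vsgn φ false
def vars (φ : Formula) : Finset ℕ := vpos φ ∪ vneg φ

/-- Modal depth. -/
def depth : Formula → ℕ
  | var _ => 0
  | bot => 0
  | imp φ ψ => max (depth φ) (depth ψ)
  | box φ => depth φ + 1

/-- Uniform substitution. -/
def subst (σ : ℕ → Formula) : Formula → Formula
  | var p => σ p
  | bot => bot
  | imp φ ψ => (subst σ φ).imp (subst σ ψ)
  | box φ => (subst σ φ).box

/-- The set of subformulas. -/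
def subfmls : Formula → Finset Formula
  | var p => {var p}
  | bot => {bot}
  | imp φ ψ => insert (imp φ ψ) (subfmls φ ∪ subfmls ψ)
  | box φ => insert (box φ) (subfmls φ)

/-- n(φ) = |{ψ : □ψ ∈ Sub(φ)}|. -/
def boxCount (φ : Formula) : ℕ :=
  ((subfmls φ).filter fun ψ => box ψ ∈ subfmls φ).card

/-- The translation ⋆ : p⋆ = p, ⊥⋆ = ⊥, (φ→ψ)⋆ = φ⋆→ψ⋆, (□φ)⋆ = φ⋆ ∧ □φ⋆. -/
def star : Formula → Formula
  | var p => var p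
  | bot => bot
  | imp φ ψ => (star φ).imp (star ψ)
  | box φ => (star φ).and (star φ).box

end Formula

/-- Propositional tautology: true under every valuation treating variables and
boxed formulas as atoms. -/
def Tautology (φ : Formula) : Prop :=
  ∀ v : Formula → Bool, v .bot = false →
    (∀ ψ θ : Formula, v (ψ.imp θ) = (!v ψ || v θ)) → v φ = true

/-- A normal modal logic: contains all tautologies and □(p→q)→(□p→□q), and is
closed under modus ponens, necessitation and uniform substitution. -/
structure IsNormal (L : Set Formula) : Prop where
  taut : ∀ φ, Tautology φ → φ ∈ L
  axK : ((Formula.var 0).imp (Formula.var 1)).box.imp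
      ((Formula.var 0).box.imp (Formula.var 1).box) ∈ L
  mp : ∀ φ ψ : Formula, φ.imp ψ ∈ L → φ ∈ L → ψ ∈ L
  nec : ∀ φ : Formula, φ ∈ L → φ.box ∈ L
  subst_mem : ∀ φ ∈ L, ∀ σ : ℕ → Formula, Formula.subst σ φ ∈ L

/-- The least normal modal logic including `X`. -/
def NormalExt (X : Set Formula) : Set Formula :=
  ⋂₀ {L : Set Formula | IsNormal L ∧ X ⊆ L}

/-- The least normal modal logic K. -/
def TheoryK : Set Formula := NormalExt ∅

def axT : Formula := (Formula.var 0).box.imp (Formula.var 0)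
def ax4 : Formula := (Formula.var 0).box.imp (Formula.var 0).box.box
def axB : Formula := (Formula.var 0).imp (Formula.var 0).dia.box
def axD : Formula := Formula.bot.box.neg
def axGL : Formula := ((Formula.var 0).box.imp (Formula.var 0)).box.imp (Formula.var 0).box
def axGrz : Formula :=
  (((Formula.var 0).imp (Formula.var 0).box).box.imp (Formula.var 0)).box.imp (Formula.var 0)

def TheoryKD : Set Formula := NormalExt {axD}
def TheoryKT : Set Formula := NormalExt {axT}
def TheoryKB : Set Formula := NormalExt {axB}
def TheoryKDB : Set Formula := NormalExt {axD, axB}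
def TheoryKTB : Set Formula := NormalExt {axT, axB}
def TheoryK4 : Set Formula := NormalExt {ax4}
def TheoryS4 : Set Formula := NormalExt {axT, ax4}
def TheoryGL : Set Formula := NormalExt {axGL}
def TheoryGrz : Set Formula := NormalExt {axGrz}

/-- L⋆ := {φ : L ⊢ φ⋆}. -/
def starLogic (L : Set Formula) : Set Formula := {φ | Formula.star φ ∈ L}

/-- θ is a uniform Lyndon interpolant of (φ, P, Q) in L. -/
def IsULInterpolant (L : Set Formula) (φ : Formula) (P Q : Finset ℕ) (θ : Formula) : Prop :=
  θ.vpos ⊆ φ.vpos \ P ∧ θ.vneg ⊆ φ.vneg \ Q ∧ φ.imp θ ∈ L ∧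
    ∀ ψ : Formula, ψ.vpos ∩ P = ∅ → ψ.vneg ∩ Q = ∅ → φ.imp ψ ∈ L → θ.imp ψ ∈ L

/-- The uniform Lyndon interpolation property. -/
def ULIP (L : Set Formula) : Prop :=
  ∀ (φ : Formula) (P Q : Finset ℕ), ∃ θ : Formula, IsULInterpolant L φ P Q θ

/-- The uniform interpolation property. -/
def UIP (L : Set Formula) : Prop :=
  ∀ (φ : Formula) (P : Finset ℕ), ∃ θ : Formula,
    θ.vars ⊆ φ.vars \ P ∧ φ.imp θ ∈ L ∧
      ∀ ψ : Formula, ψ.vars ∩ P = ∅ → φ.imp ψ ∈ L → θ.imp ψ ∈ L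

/-- The Lyndon interpolation property. -/
def LIP (L : Set Formula) : Prop :=
  ∀ φ ψ : Formula, φ.imp ψ ∈ L → ∃ θ : Formula,
    θ.vpos ⊆ φ.vpos ∩ ψ.vpos ∧ θ.vneg ⊆ φ.vneg ∩ ψ.vneg ∧
      φ.imp θ ∈ L ∧ θ.imp ψ ∈ L

/-- A Kripke model. -/
structure KripkeModel where
  W : Type
  nonempty : Nonempty W
  rel : W → W → Prop
  val : W → ℕ → Prop

/-- Satisfaction in a Kripke model. -/
def KripkeModel.Sat (M : KripkeModel) : Formula → M.W → Prop
  | .var p, w => M.val w p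
  | .bot, _ => False
  | .imp φ ψ, w => M.Sat φ w → M.Sat ψ w
  | .box φ, w => ∀ x, M.rel w x → M.Sat φ x

/-- A (P,Q)-formula: v⁺(φ) ⊆ P and v⁻(φ) ⊆ Q. -/
def PQFormula (P Q : Finset ℕ) (φ : Formula) : Prop := φ.vpos ⊆ P ∧ φ.vneg ⊆ Q

/-- `F n P Q` is a finite list of (P,Q)-formulas of modal depth ≤ n such that every
(P,Q)-formula of modal depth ≤ n is K-provably equivalent to some member. -/
def IsFamily (F : ℕ → Finset ℕ → Finset ℕ → List Formula) : Prop :=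
  ∀ (n : ℕ) (P Q : Finset ℕ),
    (∀ φ ∈ F n P Q, PQFormula P Q φ ∧ φ.depth ≤ n) ∧
    ∀ ψ : Formula, PQFormula P Q ψ → ψ.depth ≤ n →
      ∃ φ ∈ F n P Q, Formula.iff φ ψ ∈ TheoryK

/-- Th_n^{(P,Q)}(w) = {φ ∈ F_n^{(P,Q)} : w ⊩ φ}. -/
def Th (F : ℕ → Finset ℕ → Finset ℕ → List Formula) (M : KripkeModel)
    (n : ℕ) (P Q : Finset ℕ) (w : M.W) : Set Formula :=
  {φ | φ ∈ F n P Q ∧ M.Sat φ w}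

def conjList : List Formula → Formula
  | [] => Formula.top
  | φ :: l => φ.and (conjList l)

open Classical in
/-- C_n^{(P,Q)}(w) = ⋀ Th_n^{(P,Q)}(w). -/
noncomputable def Cfml (F : ℕ → Finset ℕ → Finset ℕ → List Formula) (M : KripkeModel)
    (n : ℕ) (P Q : Finset ℕ) (w : M.W) : Formula :=
  conjList ((F n P Q).filter fun φ => decide (M.Sat φ w))

/-- Layered (P,Q)-bisimulation between M and M'. -/
def LayeredBisim (P Q : Finset ℕ) (M M' : KripkeModel)
    (Z : M.W → ℕ → M'.W → Prop) : Prop :=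
  (∀ w n w', Z w n w' →
    (∀ p ∈ P, M.val w p → M'.val w' p) ∧ (∀ q ∈ Q, ¬M.val w q → ¬M'.val w' q)) ∧
  (∀ w n w', Z w (n + 1) w' → ∀ x, M.rel w x → ∃ x', M'.rel w' x' ∧ Z x n x') ∧
  (∀ w n w', Z w (n + 1) w' → ∀ x', M'.rel w' x' → ∃ x, M.rel w x ∧ Z x n x')

/-- Downward closedness of a layered bisimulation. -/
def DownClosed (M M' : KripkeModel) (Z : M.W → ℕ → M'.W → Prop) : Prop :=
  ∀ w n w', Z w n w' → ∀ m ≤ n, Z w m w'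

/-- A class of Kripke models has ULIP. -/
def ClassULIP (F : ℕ → Finset ℕ → Finset ℕ → List Formula) (Cl : Set KripkeModel) : Prop :=
  ∀ P1 P2 P3 Q1 Q2 Q3 : Finset ℕ,
    Disjoint P1 P2 → Disjoint P1 P3 → Disjoint P2 P3 →
    Disjoint Q1 Q2 → Disjoint Q1 Q3 → Disjoint Q2 Q3 →
    ∀ M : KripkeModel, M ∈ Cl → ∀ M' : KripkeModel, M' ∈ Cl →
    ∀ w : M.W, ∀ w' : M'.W, ∀ m n : ℕ,
      Th F M n P2 Q2 w ⊆ Th F M' n P2 Q2 w' →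
      ∃ Mst : KripkeModel, Mst ∈ Cl ∧ ∃ wst : Mst.W,
        Th F M n (P1 ∪ P2) (Q1 ∪ Q2) w ⊆ Th F Mst n (P1 ∪ P2) (Q1 ∪ Q2) wst ∧
        Th F Mst m (P2 ∪ P3) (Q2 ∪ Q3) wst ⊆ Th F M' m (P2 ∪ P3) (Q2 ∪ Q3) w'

/-!
A pre-interpolant of `(φ, P, Q)` is the negation of a uniform Lyndon interpolant of
`(¬φ, Q, P)`: contraposition turns `ψ → φ` into `¬φ → ¬ψ`, and negation exchanges positive
and negative occurrences, hence the roles of `P` and `Q`.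
-/

def IsULPreInterpolant (L : Set Formula) (φ : Formula) (P Q : Finset ℕ) (θ : Formula) : Prop :=
  θ.vpos ⊆ φ.vpos \ P ∧ θ.vneg ⊆ φ.vneg \ Q ∧ θ.imp φ ∈ L ∧
    ∀ ψ : Formula, ψ.vpos ∩ P = ∅ → ψ.vneg ∩ Q = ∅ → ψ.imp φ ∈ L → ψ.imp θ ∈ L

namespace Formula

@[simp]
theorem vpos_neg (φ : Formula) : φ.neg.vpos = φ.vneg := by
  simp [neg, vpos, vneg, vsgn]

@[simp]
theorem vneg_neg (φ : Formula) : φ.neg.vneg = φ.vpos := by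
  simp [neg, vpos, vneg, vsgn]

end Formula

namespace Tautology

theorem contrapose_neg_left (φ ψ : Formula) : Tautology ((φ.neg.imp ψ).imp (ψ.neg.imp φ)) := by
  intro v hbot himp
  simp only [Formula.neg, himp, hbot]
  cases v φ <;> cases v ψ <;> rfl

theorem contrapose (φ ψ : Formula) : Tautology ((φ.imp ψ).imp (ψ.neg.imp φ.neg)) := by
  intro v hbot himp
  simp only [Formula.neg, himp, hbot]
  cases v φ <;> cases v ψ <;> rfl

theorem contrapose_neg_right (φ ψ : Formula) : Tautology ((φ.imp ψ.neg).imp (ψ.imp φ.neg)) := by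
  intro v hbot himp
  simp only [Formula.neg, himp, hbot]
  cases v φ <;> cases v ψ <;> rfl

end Tautology

namespace IsNormal

variable {L : Set Formula} {φ ψ : Formula}

theorem mp_taut (hL : IsNormal L) (hτ : Tautology (φ.imp ψ)) (hφ : φ ∈ L) : ψ ∈ L :=
  hL.mp _ _ (hL.taut _ hτ) hφ

theorem neg_imp_comm (hL : IsNormal L) (h : φ.neg.imp ψ ∈ L) : ψ.neg.imp φ ∈ L :=
  hL.mp_taut (.contrapose_neg_left φ ψ) h

theorem neg_imp_neg (hL : IsNormal L) (h : φ.imp ψ ∈ L) : ψ.neg.imp φ.neg ∈ L :=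
  hL.mp_taut (.contrapose φ ψ) h

theorem imp_neg_comm (hL : IsNormal L) (h : φ.imp ψ.neg ∈ L) : ψ.imp φ.neg ∈ L :=
  hL.mp_taut (.contrapose_neg_right φ ψ) h

end IsNormal

theorem IsULInterpolant.neg_isULPreInterpolant {L : Set Formula} (hL : IsNormal L)
    {φ θ : Formula} {P Q : Finset ℕ} (hθ : IsULInterpolant L φ.neg Q P θ) :
    IsULPreInterpolant L φ P Q θ.neg := by
  obtain ⟨hpos, hneg, himp, hmin⟩ := hθ
  refine ⟨?_, ?_, hL.neg_imp_comm himp, fun ψ hψpos hψneg hψ => ?_⟩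
  · simpa using hneg
  · simpa using hpos
  · have hneg_ψ : θ.imp ψ.neg ∈ L :=
      hmin ψ.neg (by simpa using hψneg) (by simpa using hψpos) (hL.neg_imp_neg hψ)
    exact hL.imp_neg_comm hneg_ψ

/-- If a normal modal logic enjoys ULIP, then pre-interpolants exist. -/
theorem ulip_pre_interpolants (L : Set Formula) (hL : IsNormal L) (h : ULIP L) :
    ∀ (φ : Formula) (P Q : Finset ℕ), ∃ θ' : Formula,
      θ'.vpos ⊆ φ.vpos \ P ∧ θ'.vneg ⊆ φ.vneg \ Q ∧ θ'.imp φ ∈ L ∧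
        ∀ ψ : Formula, ψ.vpos ∩ P = ∅ → ψ.vneg ∩ Q = ∅ → ψ.imp φ ∈ L → ψ.imp θ' ∈ L := by
  intro φ P Q
  obtain ⟨θ, hθ⟩ := h φ.neg Q P
  exact ⟨θ.neg, hθ.neg_isULPreInterpolant hL⟩
end

section
/- Let L₀ and L₁ be normal modal logics with L₀ ⊆ L₁ and L₁ = L₀⋆. If L₀ enjoys ULIP, then L₁ enjoys ULIP. -/
/-
Over a logic with the reflexivity axiom every formula is equivalent to its ⋆-translation,
and the reflexivity axiom lies in `L₀⋆` because its translation `(p⋆ ∧ □p⋆) → p⋆` is a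
tautology. Since ⋆ preserves the positive and negative variables of a formula, a uniform
Lyndon interpolant of `(φ⋆, P, Q)` in `L₀` is one of `(φ, P, Q)` in `L₀⋆`: if `L₀⋆ ⊢ φ → ψ`
then `L₀ ⊢ φ⋆ → ψ⋆`, so `L₀ ⊢ θ → ψ⋆`, and `L₀⋆ ⊢ ψ⋆ → ψ`.
-/

namespace Formula

theorem vsgn_and (φ ψ : Formula) (b : Bool) : (φ.and ψ).vsgn b = φ.vsgn b ∪ ψ.vsgn b := by
  cases b <;> simp [Formula.and, neg, vsgn]

theorem vsgn_star (φ : Formula) (b : Bool) : φ.star.vsgn b = φ.vsgn b := by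
  induction φ generalizing b with
  | var p => rfl
  | bot => rfl
  | imp φ ψ ihφ ihψ => simp [star, vsgn, ihφ, ihψ]
  | box φ ih => simp [star, vsgn_and, vsgn, ih]

theorem vpos_star (φ : Formula) : φ.star.vpos = φ.vpos := vsgn_star φ true

theorem vneg_star (φ : Formula) : φ.star.vneg = φ.vneg := vsgn_star φ false

end Formula

namespace IsNormal

open Formula

variable {L : Set Formula}

theorem mp₂ (h : IsNormal L) {a b c : Formula} (t : Tautology (a.imp (b.imp c)))
    (ha : a ∈ L) (hb : b ∈ L) : c ∈ L :=
  h.mp _ _ (h.mp _ _ (h.taut _ t) ha) hb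

theorem imp_self (h : IsNormal L) (a : Formula) : a.imp a ∈ L :=
  h.taut _ fun v _ hv => by rw [hv]; cases v a <;> rfl

theorem imp_trans (h : IsNormal L) {a b c : Formula}
    (hab : a.imp b ∈ L) (hbc : b.imp c ∈ L) : a.imp c ∈ L :=
  h.mp₂ (fun v _ hv => by simp only [hv]; cases v a <;> cases v b <;> cases v c <;> rfl) hab hbc

theorem imp_imp_imp (h : IsNormal L) {a a' b b' : Formula}
    (ha : a'.imp a ∈ L) (hb : b.imp b' ∈ L) : (a.imp b).imp (a'.imp b') ∈ L :=
  h.mp₂ (fun v _ hv => by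
    simp only [hv]; cases v a <;> cases v a' <;> cases v b <;> cases v b' <;> rfl) ha hb

theorem imp_and_of_imp_of_imp (h : IsNormal L) {a b c : Formula}
    (hab : a.imp b ∈ L) (hbc : b.imp c ∈ L) : a.imp (c.and b) ∈ L :=
  h.mp₂ (fun v h0 hv => by
    simp only [Formula.and, neg, hv, h0]; cases v a <;> cases v b <;> cases v c <;> rfl) hab hbc

theorem and_imp_of_imp (h : IsNormal L) (a : Formula) {b c : Formula}
    (hbc : b.imp c ∈ L) : (a.and b).imp c ∈ L :=
  h.mp _ _ (h.taut _ fun v h0 hv => by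
    simp only [Formula.and, neg, hv, h0]; cases v a <;> cases v b <;> cases v c <;> rfl) hbc

theorem box_imp_box (h : IsNormal L) {a b : Formula} (hab : a.imp b ∈ L) :
    a.box.imp b.box ∈ L := by
  have hK := h.subst_mem _ h.axK fun n => if n = 0 then a else b
  simp only [subst, if_pos, one_ne_zero, if_false] at hK
  exact h.mp _ _ hK (h.nec _ hab)

theorem imp_star_and_star_imp (h : IsNormal L) (hT : ∀ a : Formula, a.box.imp a ∈ L)
    (a : Formula) : a.imp a.star ∈ L ∧ a.star.imp a ∈ L := by
  induction a with
  | var p => exact ⟨h.imp_self _, h.imp_self _⟩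
  | bot => exact ⟨h.imp_self _, h.imp_self _⟩
  | imp a b iha ihb => exact ⟨h.imp_imp_imp iha.2 ihb.1, h.imp_imp_imp iha.1 ihb.2⟩
  | box a ih =>
    exact ⟨h.imp_and_of_imp_of_imp (h.box_imp_box ih.1) (hT a.star),
      h.and_imp_of_imp _ (h.box_imp_box ih.2)⟩

end IsNormal

theorem box_imp_self_mem_starLogic {L : Set Formula} (htaut : ∀ φ, Tautology φ → φ ∈ L)
    (a : Formula) : a.box.imp a ∈ starLogic L :=
  htaut _ fun v h0 hv => by
    simp only [Formula.star, Formula.and, Formula.neg, hv, h0]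
    cases v a.star <;> cases v a.star.box <;> rfl

theorem IsULInterpolant.starLogic_of_star {L : Set Formula} (htaut : ∀ φ, Tautology φ → φ ∈ L)
    (hstar : IsNormal (starLogic L)) (hsub : L ⊆ starLogic L) {φ θ : Formula}
    {P Q : Finset ℕ} (hθ : IsULInterpolant L φ.star P Q θ) :
    IsULInterpolant (starLogic L) φ P Q θ := by
  obtain ⟨hpos, hneg, himp, huniform⟩ := hθ
  have hequiv := hstar.imp_star_and_star_imp (box_imp_self_mem_starLogic htaut)
  refine ⟨by rwa [← φ.vpos_star], by rwa [← φ.vneg_star],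
    hstar.imp_trans (hequiv φ).1 (hsub himp), fun ψ hψpos hψneg hφψ => ?_⟩
  have hθψ : θ.imp ψ.star ∈ L :=
    huniform _ (by rwa [ψ.vpos_star]) (by rwa [ψ.vneg_star]) hφψ
  exact hstar.imp_trans (hsub hθψ) (hequiv ψ).2

/-- If L₀ ⊆ L₁ = L₀⋆ and L₀ enjoys ULIP, then L₁ enjoys ULIP. -/
theorem ulip_star (L₀ L₁ : Set Formula) (h₀ : IsNormal L₀) (h₁ : IsNormal L₁)
    (hsub : L₀ ⊆ L₁) (hstar : L₁ = starLogic L₀) (hulip : ULIP L₀) : ULIP L₁ := by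
  subst hstar
  intro φ P Q
  obtain ⟨θ, hθ⟩ := hulip φ.star P Q
  exact ⟨θ, hθ.starLogic_of_star h₀.taut h₁ hsub⟩
end

section
/- If L is a normal modal logic with K4 ⊆ L ⊆ S4, then L⋆ = S4. -/
/-!
Since `(□φ)⋆ = φ⋆ ∧ □φ⋆`, every normal logic containing T proves `φ⋆ ↔ φ`;
hence `L⋆ ⊆ S4⋆ = S4`. Conversely, `⋆` commutes with substitution and maps K,
modus ponens and necessitation to derivable principles, so `L⋆` is normal. It
contains T because `p ∧ □p → p` is a tautology, and it contains 4 because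
`p ∧ □p → □(p ∧ □p)` is K4-provable. Hence `S4 ⊆ L⋆`.
-/

namespace IsNormal

open Formula

variable {L : Set Formula} {A A' B B' C : Formula}

theorem mp₂_s4 (hL : IsNormal L) (ht : Tautology (A.imp (B.imp C))) (hA : A ∈ L) (hB : B ∈ L) :
    C ∈ L :=
  hL.mp _ _ (hL.mp _ _ (hL.taut _ ht) hA) hB

theorem imp_self_s4 (hL : IsNormal L) (A : Formula) : A.imp A ∈ L :=
  hL.taut _ fun v _ hi => by simp [hi]

theorem imp_imp_and (hL : IsNormal L) (A B : Formula) : A.imp (B.imp (A.and B)) ∈ L :=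
  hL.taut _ fun v hb hi => by simp only [Formula.and, neg, hi, hb]; grind

theorem and_intro (hL : IsNormal L) (hA : A ∈ L) (hB : B ∈ L) : A.and B ∈ L :=
  hL.mp _ _ (hL.mp _ _ (hL.imp_imp_and A B) hA) hB

theorem and_right (hL : IsNormal L) (A B : Formula) : (A.and B).imp B ∈ L :=
  hL.taut _ fun v hb hi => by simp only [Formula.and, neg, hi, hb]; grind

theorem imp_trans_s4 (hL : IsNormal L) (hAB : A.imp B ∈ L) (hBC : B.imp C ∈ L) : A.imp C ∈ L :=
  hL.mp₂_s4 (fun v _ hi => by simp only [hi]; grind) hAB hBC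

theorem imp_mp (hL : IsNormal L) (hABC : A.imp (B.imp C) ∈ L) (hAB : A.imp B ∈ L) :
    A.imp C ∈ L :=
  hL.mp₂_s4 (fun v _ hi => by simp only [hi]; grind) hABC hAB

theorem imp_and (hL : IsNormal L) (hAB : A.imp B ∈ L) (hAC : A.imp C ∈ L) :
    A.imp (B.and C) ∈ L :=
  hL.mp₂_s4 (fun v hb hi => by simp only [Formula.and, neg, hi, hb]; grind) hAB hAC

theorem imp_imp_imp_s4 (hL : IsNormal L) (hA : A.imp A' ∈ L) (hB : B'.imp B ∈ L) :
    (A'.imp B').imp (A.imp B) ∈ L :=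
  hL.mp₂_s4 (fun v _ hi => by simp only [hi]; grind) hA hB

theorem box_imp_distrib (hL : IsNormal L) (A B : Formula) :
    (A.imp B).box.imp (A.box.imp B.box) ∈ L := by
  simpa [subst] using hL.subst_mem _ hL.axK fun n => if n = 0 then A else B

theorem box_mono (hL : IsNormal L) (h : A.imp B ∈ L) : A.box.imp B.box ∈ L :=
  hL.mp _ _ (hL.box_imp_distrib A B) (hL.nec _ h)

theorem box_imp_self (hL : IsNormal L) (hT : axT ∈ L) (A : Formula) : A.box.imp A ∈ L := by
  simpa [axT, subst] using hL.subst_mem _ hT fun _ => A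

theorem box_imp_box_box (hL : IsNormal L) (h4 : ax4 ∈ L) (A : Formula) :
    A.box.imp A.box.box ∈ L := by
  simpa [ax4, subst] using hL.subst_mem _ h4 fun _ => A

theorem normalExt_subset (hL : IsNormal L) {X : Set Formula} (hX : X ⊆ L) :
    NormalExt X ⊆ L :=
  fun _ h => h L ⟨hL, hX⟩

end IsNormal

theorem isNormal_normalExt (X : Set Formula) : IsNormal (NormalExt X) where
  taut φ h _ hL := hL.1.taut φ h
  axK _ hL := hL.1.axK
  mp φ ψ h₁ h₂ _ hL := hL.1.mp φ ψ (h₁ _ hL) (h₂ _ hL)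
  nec φ h _ hL := hL.1.nec φ (h _ hL)
  subst_mem φ h σ _ hL := hL.1.subst_mem φ (h _ hL) σ

theorem subset_normalExt (X : Set Formula) : X ⊆ NormalExt X :=
  fun _ h _ hL => hL.2 h

theorem Formula.star_subst (σ : ℕ → Formula) (φ : Formula) :
    (φ.subst σ).star = φ.star.subst fun n => (σ n).star := by
  induction φ with
  | var p => rfl
  | bot => rfl
  | imp φ ψ ihφ ihψ => simp [subst, star, ihφ, ihψ]
  | box φ ih => simp [subst, star, Formula.and, neg, ih]

section Star

open Formula

variable {L : Set Formula}

theorem IsNormal.star_imp_and_imp_star (hL : IsNormal L) (hT : axT ∈ L) (φ : Formula) :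
    φ.star.imp φ ∈ L ∧ φ.imp φ.star ∈ L := by
  induction φ with
  | var p => exact ⟨hL.imp_self_s4 _, hL.imp_self_s4 _⟩
  | bot => exact ⟨hL.imp_self_s4 _, hL.imp_self_s4 _⟩
  | imp φ ψ ihφ ihψ => exact ⟨hL.imp_imp_imp_s4 ihφ.2 ihψ.1, hL.imp_imp_imp_s4 ihφ.1 ihψ.2⟩
  | box φ ih =>
    exact ⟨hL.imp_trans_s4 (hL.and_right _ _) (hL.box_mono ih.1),
      hL.imp_and (hL.imp_trans_s4 (hL.box_imp_self hT φ) ih.2) (hL.box_mono ih.2)⟩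

theorem starLogic_subset_S4 (hS4 : L ⊆ TheoryS4) : starLogic L ⊆ TheoryS4 := by
  have hN : IsNormal TheoryS4 := isNormal_normalExt _
  have hT : axT ∈ TheoryS4 := subset_normalExt _ (by simp)
  exact fun φ hφ => hN.mp _ _ (hN.star_imp_and_imp_star hT φ).1 (hS4 hφ)

theorem isNormal_starLogic (hL : IsNormal L) : IsNormal (starLogic L) where
  taut φ h := hL.taut _ fun v hb hi => h (fun ψ => v ψ.star) hb fun ψ θ => hi ψ.star θ.star
  axK := hL.mp _ _
    (hL.taut _ fun v hb hi => by simp only [Formula.star, Formula.and, neg, hi, hb]; grind)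
    hL.axK
  mp φ ψ := hL.mp φ.star ψ.star
  nec φ h := hL.and_intro h (hL.nec _ h)
  subst_mem φ h σ := by
    show (φ.subst σ).star ∈ L
    exact star_subst σ φ ▸ hL.subst_mem _ h _

theorem axT_mem_starLogic (hL : IsNormal L) : axT ∈ starLogic L :=
  hL.taut _ fun v hb hi => by simp only [axT, Formula.star, Formula.and, neg, hi, hb]; grind

theorem IsNormal.and_box_imp_box_and_box (hL : IsNormal L) (h4 : ax4 ∈ L) (A : Formula) :
    (A.and A.box).imp (A.and A.box).box ∈ L := by
  have hbox : A.box.imp (A.box.box.imp (A.and A.box).box) ∈ L :=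
    hL.imp_trans_s4 (hL.box_mono (hL.imp_imp_and _ _)) (hL.box_imp_distrib _ _)
  exact hL.imp_trans_s4 (hL.and_right _ _) (hL.imp_mp hbox (hL.box_imp_box_box h4 A))

theorem ax4_mem_starLogic (hL : IsNormal L) (h4 : ax4 ∈ L) : ax4 ∈ starLogic L :=
  hL.imp_and (hL.imp_self_s4 _) (hL.and_box_imp_box_and_box h4 _)

theorem S4_subset_starLogic (hL : IsNormal L) (h4 : ax4 ∈ L) : TheoryS4 ⊆ starLogic L := by
  refine (isNormal_starLogic hL).normalExt_subset ?_
  rintro _ (rfl | rfl)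
  exacts [axT_mem_starLogic hL, ax4_mem_starLogic hL h4]

end Star

/-- If K4 ⊆ L ⊆ S4 (L a normal modal logic), then L⋆ = S4. -/
theorem starLogic_eq_S4 (L : Set Formula) (hL : IsNormal L)
    (hK4 : TheoryK4 ⊆ L) (hS4 : L ⊆ TheoryS4) : starLogic L = TheoryS4 :=
  (starLogic_subset_S4 hS4).antisymm (S4_subset_starLogic hL (hK4 (subset_normalExt _ rfl)))
end

section
/- Let P, Q be finite sets of propositional variables, let M=(W,≺,⊩) and M'=(W',≺',⊩') be Kripke models, and let w ∈ W, w' ∈ W', n ∈ ω. Then the following are equivalent: (1) Th_n^{(P,Q)}(w) ⊆ Th_n^{(P,Q)}(w'); (2) there exists a layered (P,Q)-bisimulation Z between M and M' with (w,n,w') ∈ Z; (3) there exists a downward closed layered (P,Q)-bisimulation Z between M and M' with (w,n,w') ∈ Z. -/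
/-! The theories `Th_k` themselves form a downward closed layered bisimulation: the zig step
holds because `w ⊩ ◇ C_k(x)` transfers to `w'`, the zag step because otherwise `w ⊩ □ D_k(x')`,
with `D_k(x')` the disjunction of the members of `F_k` false at `x'`, would transfer to `w'`.
Conversely a layered bisimulation preserves (P,Q)-formulas of depth `≤ n` forwards and
(Q,P)-formulas backwards, by induction on the formula. Passing between `F_n` and arbitrary
formulas uses soundness of `K` for Kripke models. -/

open Formula

def disjList : List Formula → Formula
  | [] => Formula.bot
  | φ :: l => φ.neg.imp (disjList l)

namespace Formula

@[simp] lemma depth_neg (φ : Formula) : φ.neg.depth = φ.depth := by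
  simp [neg, depth]

@[simp] lemma depth_and (φ ψ : Formula) : (φ.and ψ).depth = max φ.depth ψ.depth := by
  simp [Formula.and, depth]

@[simp] lemma depth_dia (φ : Formula) : φ.dia.depth = φ.depth + 1 := by
  simp [dia, depth]

lemma depth_conjList_le {n : ℕ} {l : List Formula} (h : ∀ φ ∈ l, φ.depth ≤ n) :
    (conjList l).depth ≤ n := by
  induction l with
  | nil => simp [conjList, top, depth]
  | cons φ l ih => simpa [conjList, h φ] using ih fun ψ hψ => h ψ (by simp [hψ])

lemma depth_disjList_le {n : ℕ} {l : List Formula} (h : ∀ φ ∈ l, φ.depth ≤ n) :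
    (disjList l).depth ≤ n := by
  induction l with
  | nil => simp [disjList, depth]
  | cons φ l ih => simpa [disjList, depth, h φ] using ih fun ψ hψ => h ψ (by simp [hψ])

end Formula

namespace PQFormula

variable {P Q : Finset ℕ} {φ ψ : Formula}

lemma var {p : ℕ} (hp : p ∈ P) : PQFormula P Q (.var p) := by
  simp [PQFormula, vpos, vneg, vsgn, hp]

lemma bot : PQFormula P Q .bot := by
  simp [PQFormula, vpos, vneg, vsgn]

lemma imp_iff : PQFormula P Q (φ.imp ψ) ↔ PQFormula Q P φ ∧ PQFormula P Q ψ := by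
  simp only [PQFormula, vpos, vneg, vsgn, Bool.not_true, Bool.not_false, Finset.union_subset_iff]
  tauto

lemma imp (hφ : PQFormula Q P φ) (hψ : PQFormula P Q ψ) : PQFormula P Q (φ.imp ψ) :=
  imp_iff.2 ⟨hφ, hψ⟩

lemma neg (h : PQFormula Q P φ) : PQFormula P Q φ.neg := h.imp bot

lemma and (hφ : PQFormula P Q φ) (hψ : PQFormula P Q ψ) : PQFormula P Q (φ.and ψ) :=
  (hφ.imp hψ.neg).neg

lemma box (h : PQFormula P Q φ) : PQFormula P Q φ.box := h

lemma dia (h : PQFormula P Q φ) : PQFormula P Q φ.dia := h.neg.box.neg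

lemma conjList {l : List Formula} (h : ∀ φ ∈ l, PQFormula P Q φ) :
    PQFormula P Q (conjList l) := by
  induction l with
  | nil => exact bot.neg.neg.neg
  | cons φ l ih => exact (h φ (by simp)).and (ih fun ψ hψ => h ψ (by simp [hψ]))

lemma disjList {l : List Formula} (h : ∀ φ ∈ l, PQFormula P Q φ) :
    PQFormula P Q (disjList l) := by
  induction l with
  | nil => exact bot
  | cons φ l ih => exact (h φ (by simp)).neg.imp (ih fun ψ hψ => h ψ (by simp [hψ]))

end PQFormula

namespace KripkeModel

variable (M : KripkeModel)

@[simp] lemma sat_neg (φ : Formula) (w : M.W) : M.Sat φ.neg w ↔ ¬M.Sat φ w := by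
  simp [neg, Sat]

@[simp] lemma sat_and (φ ψ : Formula) (w : M.W) :
    M.Sat (φ.and ψ) w ↔ M.Sat φ w ∧ M.Sat ψ w := by
  simp [Formula.and, Sat]

@[simp] lemma sat_dia (φ : Formula) (w : M.W) :
    M.Sat φ.dia w ↔ ∃ x, M.rel w x ∧ M.Sat φ x := by
  simp [dia, Sat]

lemma sat_conjList (w : M.W) (l : List Formula) :
    M.Sat (conjList l) w ↔ ∀ φ ∈ l, M.Sat φ w := by
  induction l with
  | nil => simp [conjList, top, Sat]
  | cons φ l ih => simp [conjList, ih]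

lemma sat_disjList (w : M.W) (l : List Formula) :
    M.Sat (disjList l) w ↔ ∃ φ ∈ l, M.Sat φ w := by
  induction l with
  | nil => simp [disjList, Sat]
  | cons φ l ih =>
    simp only [disjList, Sat, sat_neg, ih, List.exists_mem_cons_iff, ← or_iff_not_imp_left]

def substModel (σ : ℕ → Formula) : KripkeModel :=
  ⟨M.W, M.nonempty, M.rel, fun w p => M.Sat (σ p) w⟩

lemma sat_subst (σ : ℕ → Formula) (φ : Formula) (w : M.W) :
    M.Sat (φ.subst σ) w ↔ (M.substModel σ).Sat φ w := by
  induction φ generalizing w with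
  | var p => rfl
  | bot => rfl
  | imp φ ψ ihφ ihψ => simp only [subst, Sat, ihφ, ihψ]
  | box φ ih => simp only [subst, Sat, ih]; rfl

end KripkeModel

def Formula.Valid (φ : Formula) : Prop := ∀ (M : KripkeModel) (w : M.W), M.Sat φ w

open Classical in
lemma isNormal_setOf_valid : IsNormal {φ | φ.Valid} where
  taut φ hφ M w := by
    refine of_decide_eq_true (hφ (fun ψ => decide (M.Sat ψ w)) ?_ fun ψ θ => ?_)
    · exact decide_eq_false id
    · by_cases M.Sat ψ w <;> simp [KripkeModel.Sat, *]
  axK M w h₁ h₂ x hx := h₁ x hx (h₂ x hx)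
  mp _ _ h₁ h₂ M w := h₁ M w (h₂ M w)
  nec _ h M _ x _ := h M x
  subst_mem _ h σ M w := (M.sat_subst σ _ w).2 (h (M.substModel σ) w)

lemma Formula.valid_of_mem_theoryK {φ : Formula} (h : φ ∈ TheoryK) : φ.Valid :=
  h {φ | φ.Valid} ⟨isNormal_setOf_valid, Set.empty_subset _⟩

lemma KripkeModel.sat_iff_of_iff_mem_theoryK {φ ψ : Formula} (h : φ.iff ψ ∈ TheoryK)
    (M : KripkeModel) (w : M.W) : M.Sat φ w ↔ M.Sat ψ w :=
  iff_iff_implies_and_implies.2 ((M.sat_and _ _ w).1 (valid_of_mem_theoryK h M w))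

namespace LayeredBisim

variable {P Q : Finset ℕ} {M M' : KripkeModel} {Z : M.W → ℕ → M'.W → Prop}

lemma sat_transfer (hZ : LayeredBisim P Q M M' Z) (φ : Formula) {n : ℕ} {w : M.W}
    {w' : M'.W} (hd : φ.depth ≤ n) (hz : Z w n w') :
    (PQFormula P Q φ → M.Sat φ w → M'.Sat φ w') ∧
      (PQFormula Q P φ → M'.Sat φ w' → M.Sat φ w) := by
  obtain ⟨hatom, hzig, hzag⟩ := hZ
  induction φ generalizing n w w' with
  | var p =>
    have hp : p ∈ (Formula.var p).vpos := by simp [vpos, vsgn]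
    exact ⟨fun hpq hs => (hatom w n w' hz).1 p (hpq.1 hp) hs,
      fun hpq hs => by_contra fun hns => (hatom w n w' hz).2 p (hpq.1 hp) hns hs⟩
  | bot => exact ⟨fun _ => id, fun _ => id⟩
  | imp φ ψ ihφ ihψ =>
    obtain ⟨hdφ, hdψ⟩ := max_le_iff.1 hd
    refine ⟨fun hpq hs hφ => ?_, fun hpq hs hφ => ?_⟩ <;>
      obtain ⟨hpqφ, hpqψ⟩ := PQFormula.imp_iff.1 hpq
    · exact (ihψ hdψ hz).1 hpqψ (hs ((ihφ hdφ hz).2 hpqφ hφ))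
    · exact (ihψ hdψ hz).2 hpqψ (hs ((ihφ hdφ hz).1 hpqφ hφ))
  | box φ ih =>
    obtain ⟨m, rfl⟩ : ∃ m, n = m + 1 := Nat.exists_eq_add_one.2 ((Nat.succ_pos _).trans_le hd)
    have hdφ : φ.depth ≤ m := Nat.le_of_succ_le_succ hd
    refine ⟨fun hpq hs x' hx' => ?_, fun hpq hs x hx => ?_⟩
    · obtain ⟨x, hx, hzx⟩ := hzag w m w' hz x' hx'
      exact (ih hdφ hzx).1 hpq (hs x hx)
    · obtain ⟨x', hx', hzx⟩ := hzig w m w' hz x hx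
      exact (ih hdφ hzx).2 hpq (hs x' hx')

lemma th_subset {F : ℕ → Finset ℕ → Finset ℕ → List Formula} (hF : IsFamily F)
    (hZ : LayeredBisim P Q M M' Z) {n : ℕ} {w : M.W} {w' : M'.W} (hz : Z w n w') :
    Th F M n P Q w ⊆ Th F M' n P Q w' := fun φ ⟨hφF, hs⟩ =>
  ⟨hφF, (hZ.sat_transfer φ ((hF n P Q).1 φ hφF).2 hz).1 ((hF n P Q).1 φ hφF).1 hs⟩

end LayeredBisim

section Theories

variable {F : ℕ → Finset ℕ → Finset ℕ → List Formula} {P Q : Finset ℕ} {M M' : KripkeModel}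
  {n : ℕ}

lemma sat_of_th_subset (hF : IsFamily F) {w : M.W} {w' : M'.W}
    (h : Th F M n P Q w ⊆ Th F M' n P Q w') {φ : Formula} (hφ : PQFormula P Q φ)
    (hd : φ.depth ≤ n) (hs : M.Sat φ w) : M'.Sat φ w' := by
  obtain ⟨ψ, hψF, hψφ⟩ := (hF n P Q).2 φ hφ hd
  have hψ : ψ ∈ Th F M' n P Q w' := h ⟨hψF, (M.sat_iff_of_iff_mem_theoryK hψφ w).2 hs⟩
  exact (M'.sat_iff_of_iff_mem_theoryK hψφ w').1 hψ.2

lemma th_subset_of_le (hF : IsFamily F) {w : M.W} {w' : M'.W}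
    (h : Th F M n P Q w ⊆ Th F M' n P Q w') {m : ℕ} (hm : m ≤ n) :
    Th F M m P Q w ⊆ Th F M' m P Q w' := fun φ ⟨hφF, hs⟩ =>
  ⟨hφF, sat_of_th_subset hF h ((hF m P Q).1 φ hφF).1 (((hF m P Q).1 φ hφF).2.trans hm) hs⟩

lemma pqFormula_cfml (hF : IsFamily F) (w : M.W) : PQFormula P Q (Cfml F M n P Q w) :=
  PQFormula.conjList fun φ hφ => ((hF n P Q).1 φ (List.mem_of_mem_filter hφ)).1

lemma depth_cfml_le (hF : IsFamily F) (w : M.W) : (Cfml F M n P Q w).depth ≤ n :=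
  depth_conjList_le fun φ hφ => ((hF n P Q).1 φ (List.mem_of_mem_filter hφ)).2

lemma sat_cfml_iff_th_subset (w : M.W) (w' : M'.W) :
    M'.Sat (Cfml F M n P Q w) w' ↔ Th F M n P Q w ⊆ Th F M' n P Q w' := by
  simp only [Cfml, KripkeModel.sat_conjList, List.mem_filter, decide_eq_true_eq, and_imp]
  exact ⟨fun h φ ⟨hφF, hs⟩ => ⟨hφF, h φ hφF hs⟩, fun h φ hφF hs => (h ⟨hφF, hs⟩).2⟩

open Classical in
noncomputable def Dfml (F : ℕ → Finset ℕ → Finset ℕ → List Formula) (M : KripkeModel)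
    (n : ℕ) (P Q : Finset ℕ) (w : M.W) : Formula :=
  disjList ((F n P Q).filter fun φ => decide ¬M.Sat φ w)

lemma pqFormula_dfml (hF : IsFamily F) (w : M.W) : PQFormula P Q (Dfml F M n P Q w) :=
  PQFormula.disjList fun φ hφ => ((hF n P Q).1 φ (List.mem_of_mem_filter hφ)).1

lemma depth_dfml_le (hF : IsFamily F) (w : M.W) : (Dfml F M n P Q w).depth ≤ n :=
  depth_disjList_le fun φ hφ => ((hF n P Q).1 φ (List.mem_of_mem_filter hφ)).2

lemma sat_dfml_iff_not_th_subset (w : M.W) (w' : M'.W) :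
    M.Sat (Dfml F M' n P Q w') w ↔ ¬Th F M n P Q w ⊆ Th F M' n P Q w' := by
  rw [← not_iff_not, not_not, ← sat_cfml_iff_th_subset (F := F)]
  simp [Dfml, Cfml, KripkeModel.sat_disjList, KripkeModel.sat_conjList, not_imp_not]

lemma layeredBisim_th_subset (hF : IsFamily F) :
    LayeredBisim P Q M M' fun w k w' => Th F M k P Q w ⊆ Th F M' k P Q w' := by
  refine ⟨fun w k w' h => ⟨fun p hp hs => ?_, fun q hq hns hs => ?_⟩,
    fun w k w' h x hx => ?_, fun w k w' h x' hx' => ?_⟩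
  · exact sat_of_th_subset hF h (.var hp) (Nat.zero_le _) hs
  · have hq' : PQFormula P Q (Formula.var q).neg := (PQFormula.var hq).neg
    exact (M'.sat_neg _ w').1
      (sat_of_th_subset hF h hq' (by simp [depth]) ((M.sat_neg _ w).2 hns)) hs
  · have hxC : M.Sat (Cfml F M k P Q x) x := (sat_cfml_iff_th_subset x x).2 le_rfl
    have hwC : M'.Sat (Cfml F M k P Q x).dia w' :=
      sat_of_th_subset hF h (pqFormula_cfml hF x).dia (by simpa using depth_cfml_le hF x)
        ((M.sat_dia _ w).2 ⟨x, hx, hxC⟩)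
    obtain ⟨x', hx', hx'C⟩ := (M'.sat_dia _ w').1 hwC
    exact ⟨x', hx', (sat_cfml_iff_th_subset x x').1 hx'C⟩
  · by_contra! hnone
    have hwD : M.Sat (Dfml F M' k P Q x').box w := fun x hx =>
      (sat_dfml_iff_not_th_subset x x').2 (hnone x hx)
    have hx'D : M'.Sat (Dfml F M' k P Q x') x' :=
      sat_of_th_subset hF h (pqFormula_dfml hF x').box
        (by simpa [depth] using depth_dfml_le hF x') hwD x' hx'
    exact (sat_dfml_iff_not_th_subset x' x').1 hx'D le_rfl

lemma downClosed_th_subset (hF : IsFamily F) :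
    DownClosed M M' fun w k w' => Th F M k P Q w ⊆ Th F M' k P Q w' :=
  fun _ _ _ h _ hm => th_subset_of_le hF h hm

end Theories

/-- Theorem on layered (P,Q)-bisimulations: theory inclusion up to depth n is
equivalent to the existence of a (downward closed) layered (P,Q)-bisimulation
relating w and w' at level n. -/
theorem layered_bisim_tfae (F : ℕ → Finset ℕ → Finset ℕ → List Formula) (hF : IsFamily F)
    (P Q : Finset ℕ) (M M' : KripkeModel) (w : M.W) (w' : M'.W) (n : ℕ) :
    List.TFAE
      [Th F M n P Q w ⊆ Th F M' n P Q w',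
       ∃ Z : M.W → ℕ → M'.W → Prop, LayeredBisim P Q M M' Z ∧ Z w n w',
       ∃ Z : M.W → ℕ → M'.W → Prop,
         LayeredBisim P Q M M' Z ∧ DownClosed M M' Z ∧ Z w n w'] := by
  tfae_have 1 → 3 := fun h => ⟨_, layeredBisim_th_subset hF, downClosed_th_subset hF, h⟩
  tfae_have 3 → 2 := fun ⟨Z, hZ, _, hz⟩ => ⟨Z, hZ, hz⟩
  tfae_have 2 → 1 := fun ⟨_, hZ, hz⟩ => hZ.th_subset hF hz
  tfae_finish
end
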